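/- Let S̃ be a Sasakian manifold and let S be a totally umbilical submanifold of S̃ tangent to the Reeb vector field ξ. Then S is totally geodesic. -/

import Mathlib

/-!
Abstract framework for Riemannian geometry and Riemannian submersions.

We model a Riemannian manifold `M` by: a type `Pt` of points, a commutative
ring `F` of smooth functions on `M`, and an `F`-module `VF` of vector fields
on `M`, together with evaluation of functions at points, the action of vector
fields on functions (directional derivative), a Riemannian metric `g`, the Lie
bracket, the Levi-Civita connection `nabla` (characterized by being
torsion-free and metric-compatible) and the gradient operator.
-/
structure RiemData (Pt F VF : Type) [CommRing F] [AddCommGroup VF] [Module F VF] where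
  /-- evaluation of a smooth function at a point -/
  evalF : F → Pt → ℝ
  evalF_add : ∀ f g p, evalF (f + g) p = evalF f p + evalF g p
  evalF_mul : ∀ f g p, evalF (f * g) p = evalF f p * evalF g p
  evalF_one : ∀ p, evalF 1 p = 1
  /-- directional derivative `E[f]` of a function along a vector field -/
  act : VF → F → F
  /-- the Riemannian metric -/
  g : VF → VF → F
  g_addl : ∀ E E' G, g (E + E') G = g E G + g E' G
  g_smull : ∀ (a : F) E G, g (a • E) G = a * g E G
  g_symm : ∀ E G, g E G = g G E
  g_nondeg : ∀ E, (∀ G, g E G = 0) → E = 0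
  g_posdef : ∀ E p, 0 ≤ evalF (g E E) p
  /-- the Lie bracket of vector fields -/
  bracket : VF → VF → VF
  /-- the Levi-Civita connection -/
  nabla : VF → VF → VF
  torsion_free : ∀ E G, nabla E G - nabla G E = bracket E G
  metric_compat : ∀ E G K, act E (g G K) = g (nabla E G) K + g G (nabla E K)
  nabla_addl : ∀ E E' G, nabla (E + E') G = nabla E G + nabla E' G
  nabla_addr : ∀ E G G', nabla E (G + G') = nabla E G + nabla E G'
  nabla_smull : ∀ (a : F) E G, nabla (a • E) G = a • nabla E G
  nabla_leibniz : ∀ (a : F) E G, nabla E (a • G) = act E a • G + a • nabla E G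
  /-- the gradient of a function with respect to `g` -/
  grad : F → VF
  grad_spec : ∀ f E, g (grad f) E = act E f

/-!
A Riemannian submersion `π : M → N` is modeled through the data it induces on
`M`: the orthogonal complementary projections `Vp` (onto the vertical
distribution `ker π₊`) and `Hp` (onto the horizontal distribution
`(ker π₊)^⊥`), the dimension of the fibers, the predicate of being a basic
(horizontal, `π`-related to a field on `N`) vector field, and the property
that the fibers are connected.
-/
structure RSub (Pt F VF : Type) [CommRing F] [AddCommGroup VF] [Module F VF]
    extends RiemData Pt F VF where
  /-- projection onto the vertical distribution `ker π₊` -/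
  Vp : VF → VF
  /-- projection onto the horizontal distribution `(ker π₊)^⊥` -/
  Hp : VF → VF
  Vp_add : ∀ E G, Vp (E + G) = Vp E + Vp G
  Hp_add : ∀ E G, Hp (E + G) = Hp E + Hp G
  Vp_smul : ∀ (a : F) E, Vp (a • E) = a • Vp E
  Hp_smul : ∀ (a : F) E, Hp (a • E) = a • Hp E
  compl : ∀ E, Vp E + Hp E = E
  Vp_Vp : ∀ E, Vp (Vp E) = Vp E
  Vp_Hp : ∀ E, Vp (Hp E) = 0
  Hp_Vp : ∀ E, Hp (Vp E) = 0
  orth : ∀ E G, g (Vp E) (Hp G) = 0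
  /-- the dimension of the fibers of `π` -/
  fiberDim : ℕ
  /-- `Y` is basic: horizontal and `π`-related to a vector field on `N` -/
  IsBasic : VF → Prop
  /-- the fibers of `π` are connected -/
  ConnectedFibers : Prop

namespace RSub

variable {Pt F VF : Type} [CommRing F] [AddCommGroup VF] [Module F VF]
variable (S : RSub Pt F VF)

/-- a vector field is vertical if it is its own vertical projection -/
def Vert (E : VF) : Prop := S.Vp E = E

/-- a vector field is horizontal if it is its own horizontal projection -/
def Horiz (E : VF) : Prop := S.Hp E = E

/-- O'Neill's tensor `𝒯` -/
def T (E G : VF) : VF :=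
  S.Vp (S.nabla (S.Vp E) (S.Hp G)) + S.Hp (S.nabla (S.Vp E) (S.Vp G))

/-- O'Neill's tensor `𝒜` -/
def A (E G : VF) : VF :=
  S.Vp (S.nabla (S.Hp E) (S.Hp G)) + S.Hp (S.nabla (S.Hp E) (S.Vp G))

/-- a vector field `W` vanishes at the point `p` -/
def vanishAt (W : VF) (p : Pt) : Prop := ∀ G, S.evalF (S.g W G) p = 0

/-- `α` is a geodesic of `M` whose velocity field is the restriction of the
vector field `E` along `α`; i.e. `∇_{α̇} α̇ = 0` along `α`. -/
def IsGeodesicPair (E : VF) (α : ℝ → Pt) : Prop :=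
  ∀ t, S.vanishAt (S.nabla E E) (α t)

/-- `α` is a regular curve (with velocity field `E` along `α`) -/
def IsRegularAlong (E : VF) (α : ℝ → Pt) : Prop := ∀ t, ¬ S.vanishAt E (α t)

/-- `π` is a Clairaut submersion with function `r`: `r > 0` and for every
geodesic `α` on `M` the quantity `(r ∘ α)·sin θ` is constant along `α`, where
`θ(t)` is the angle between `α̇(t)` and the horizontal space at `α(t)`.
Since `sin² θ(t) = ‖𝒱α̇(t)‖²/‖α̇(t)‖²` and a geodesic has constant speed,
this is expressed equivalently by `(r∘α)²·‖𝒱α̇‖² = c·‖α̇‖²` for a constant `c`. -/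
def IsClairaut (r : Pt → ℝ) : Prop :=
  (∀ p, 0 < r p) ∧
  ∀ (E : VF) (α : ℝ → Pt), S.IsGeodesicPair E α →
    ∃ c : ℝ, ∀ t,
      (r (α t))^2 * S.evalF (S.g (S.Vp E) (S.Vp E)) (α t) =
        c * S.evalF (S.g E E) (α t)

/-- the fibers of `π` are totally umbilical with mean curvature vector field `H` -/
def TotallyUmbilicalFibers (H : VF) : Prop :=
  ∀ U W, S.Vert U → S.Vert W → S.T U W = S.g U W • H

/-- the fibers of `π` are totally geodesic -/
def TotallyGeodesicFibers : Prop :=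
  ∀ U W, S.Vert U → S.Vert W → S.T U W = 0

end RSub

/-- An almost contact metric manifold `(M, φ, ξ, η, g)`. -/
structure ACM (Pt F VF : Type) [CommRing F] [AddCommGroup VF] [Module F VF]
    extends RiemData Pt F VF where
  phi : VF → VF
  phi_add : ∀ E G, phi (E + G) = phi E + phi G
  phi_smul : ∀ (a : F) E, phi (a • E) = a • phi E
  /-- the Reeb (characteristic) vector field -/
  xi : VF
  /-- the dual `1`-form of `ξ` -/
  eta : VF → F
  phi_xi : phi xi = 0
  eta_xi : eta xi = 1
  phi_phi : ∀ E, phi (phi E) = -E + eta E • xi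
  acm_compat : ∀ E G, g (phi E) (phi G) = g E G - eta E * eta G

/-- A Riemannian submersion from an almost contact metric manifold
`(M, φ, ξ, η, g)` onto a Riemannian manifold. -/
structure ACRSub (Pt F VF : Type) [CommRing F] [AddCommGroup VF] [Module F VF]
    extends RSub Pt F VF where
  phi : VF → VF
  phi_add : ∀ E G, phi (E + G) = phi E + phi G
  phi_smul : ∀ (a : F) E, phi (a • E) = a • phi E
  /-- the Reeb (characteristic) vector field -/
  xi : VF
  /-- the dual `1`-form of `ξ` -/
  eta : VF → F
  phi_xi : phi xi = 0
  eta_xi : eta xi = 1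
  phi_phi : ∀ E, phi (phi E) = -E + eta E • xi
  acm_compat : ∀ E G, g (phi E) (phi G) = g E G - eta E * eta G

namespace ACRSub

variable {Pt F VF : Type} [CommRing F] [AddCommGroup VF] [Module F VF]
variable (S : ACRSub Pt F VF)

/-- the total space is Sasakian: `(∇_E φ)G = g(E,G)ξ - η(G)E` -/
def Sasakian : Prop :=
  ∀ E G, S.nabla E (S.phi G) - S.phi (S.nabla E G) = S.g E G • S.xi - S.eta G • E

/-- the total space is Kenmotsu: `(∇_E φ)G = g(φE,G)ξ - η(G)φE` -/
def Kenmotsu : Prop :=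
  ∀ E G, S.nabla E (S.phi G) - S.phi (S.nabla E G) =
    S.g (S.phi E) G • S.xi - S.eta G • S.phi E

/-- `π` is anti-invariant: `φ(ker π₊) ⊆ (ker π₊)^⊥` -/
def AntiInv : Prop := ∀ W, S.toRSub.Vert W → S.toRSub.Horiz (S.phi W)

/-- `X` belongs to `μ`, the orthogonal complement of `φ(ker π₊)` in `(ker π₊)^⊥` -/
def InMu (X : VF) : Prop :=
  S.toRSub.Horiz X ∧ ∀ W, S.toRSub.Vert W → S.g X (S.phi W) = 0

/-- `π` is a Lagrangian submersion: `(ker π₊)^⊥ = φ(ker π₊)` or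
`(ker π₊)^⊥ = φ(ker π₊) ⊕ span{ξ}`; equivalently `𝒞X = 0` for horizontal `X` -/
def IsLagrangian : Prop := ∀ X, S.toRSub.Horiz X → S.Hp (S.phi X) = 0

/-- the vertical part `ℬY` of `φY` for horizontal `Y` -/
def B (Y : VF) : VF := S.Vp (S.phi Y)

/-- the horizontal part `𝒞Y` of `φY` for horizontal `Y` -/
def C (Y : VF) : VF := S.Hp (S.phi Y)

end ACRSub

/-!
In a Sasakian manifold `φ(∇_ξ ξ) = (∇_ξ φ)ξ = g(ξ,ξ)ξ - η(ξ)ξ = 0`, so `∇_ξ ξ` is a multiple of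
`ξ` and hence tangent to `S`. Thus `h(ξ,ξ) = 0`, while umbilicity gives `h(ξ,ξ) = g(ξ,ξ)H = H`.
So `H = 0`, and `h(U,V) = g(U,V)H` vanishes identically.
-/

namespace RiemData

variable {Pt F VF : Type} [CommRing F] [AddCommGroup VF] [Module F VF]
variable (M : RiemData Pt F VF)

theorem g_zero_left (G : VF) : M.g 0 G = 0 := by
  simpa using M.g_smull 0 0 G

theorem nabla_zero_right (E : VF) : M.nabla E 0 = 0 := by
  have h := M.nabla_addr E 0 0
  rw [add_zero] at h
  exact add_eq_left.mp h.symm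

theorem meanCurvature_eq_zero_of_unit_of_nabla_self_tangent (P : VF → VF) {X H : VF}
    (hXX : M.g X X = 1) (hnabla : P (M.nabla X X) = M.nabla X X)
    (humb : M.nabla X X - P (M.nabla X X) = M.g X X • H) : H = 0 := by
  rw [hnabla, sub_self, hXX, one_smul] at humb
  exact humb.symm

end RiemData

namespace ACM

variable {Pt F VF : Type} [CommRing F] [AddCommGroup VF] [Module F VF]
variable (S : ACM Pt F VF)

def IsSasakian : Prop :=
  ∀ E G, S.nabla E (S.phi G) - S.phi (S.nabla E G) = S.g E G • S.xi - S.eta G • E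

theorem phi_zero : S.phi 0 = 0 := by
  simpa using S.phi_smul 0 0

theorem g_xi_xi : S.g S.xi S.xi = 1 := by
  have h := S.acm_compat S.xi S.xi
  rw [S.phi_xi, S.eta_xi, S.g_zero_left] at h
  linear_combination -h

theorem eq_eta_smul_xi_of_phi_eq_zero {E : VF} (hE : S.phi E = 0) : E = S.eta E • S.xi := by
  have h := S.phi_phi E
  rw [hE, S.phi_zero] at h
  exact neg_add_eq_zero.mp h.symm

variable {S}

theorem IsSasakian.phi_nabla_xi_xi (hS : S.IsSasakian) : S.phi (S.nabla S.xi S.xi) = 0 := by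
  have h := hS S.xi S.xi
  rwa [S.phi_xi, S.eta_xi, S.g_xi_xi, S.nabla_zero_right, sub_self, zero_sub, neg_eq_zero] at h

theorem IsSasakian.nabla_xi_xi_eq (hS : S.IsSasakian) :
    S.nabla S.xi S.xi = S.eta (S.nabla S.xi S.xi) • S.xi :=
  S.eq_eta_smul_xi_of_phi_eq_zero hS.phi_nabla_xi_xi

end ACM

/-- The submanifold is modeled through its tangential projection `P` onto the vector fields tangent
to it; the second fundamental form is `h(U,V) = ∇_U V - P(∇_U V)` for `U`, `V` tangent to it. -/
theorem sasakian_totally_umbilical_tangent_xi_totally_geodesic_general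
    (Pt F VF : Type) [CommRing F] [AddCommGroup VF] [Module F VF]
    (S : ACM Pt F VF)
    (hSas : ∀ E G, S.nabla E (S.phi G) - S.phi (S.nabla E G) =
      S.g E G • S.xi - S.eta G • E)
    (P : VF → VF)
    (hP_smul : ∀ (a : F) E, P (a • E) = a • P E)
    (hxi_tangent : P S.xi = S.xi)
    (humb : ∃ H : VF, P H = 0 ∧ ∀ U V, P U = U → P V = V →
      S.nabla U V - P (S.nabla U V) = S.g U V • H) :
    ∀ U V, P U = U → P V = V → S.nabla U V - P (S.nabla U V) = 0 := by
  obtain ⟨H, -, hH⟩ := humb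
  have hS : S.IsSasakian := hSas
  have hnabla_tangent : P (S.nabla S.xi S.xi) = S.nabla S.xi S.xi := by
    rw [hS.nabla_xi_xi_eq, hP_smul, hxi_tangent]
  have hH_zero : H = 0 :=
    S.meanCurvature_eq_zero_of_unit_of_nabla_self_tangent P S.g_xi_xi hnabla_tangent
      (hH _ _ hxi_tangent hxi_tangent)
  intro U V hU hV
  rw [hH U V hU hV, hH_zero, smul_zero]

/-- Let `S̃` be a Sasakian manifold and `S` a totally umbilical submanifold of
`S̃` tangent to the Reeb vector field `ξ`. Then `S` is totally geodesic.
The submanifold is modeled through its tangential projection `P` (an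
idempotent, self-adjoint, `F`-linear projection of the ambient vector fields
onto those tangent to `S`); the second fundamental form is
`h(U,V) = ∇_U V - P(∇_U V)` for `U`, `V` tangent to `S`. -/
theorem sasakian_totally_umbilical_tangent_xi_totally_geodesic
    (Pt F VF : Type) [CommRing F] [AddCommGroup VF] [Module F VF]
    (S : ACM Pt F VF)
    (hSas : ∀ E G, S.nabla E (S.phi G) - S.phi (S.nabla E G) =
      S.g E G • S.xi - S.eta G • E)
    (P : VF → VF)
    (hP_add : ∀ E G, P (E + G) = P E + P G)
    (hP_smul : ∀ (a : F) E, P (a • E) = a • P E)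
    (hP_idem : ∀ E, P (P E) = P E)
    (hP_selfadj : ∀ E G, S.g (P E) G = S.g E (P G))
    (hxi_tangent : P S.xi = S.xi)
    (humb : ∃ H : VF, P H = 0 ∧ ∀ U V, P U = U → P V = V →
      S.nabla U V - P (S.nabla U V) = S.g U V • H) :
    ∀ U V, P U = U → P V = V → S.nabla U V - P (S.nabla U V) = 0 :=
  sasakian_totally_umbilical_tangent_xi_totally_geodesic_general Pt F VF S hSas P hP_smul
    hxi_tangent humb
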